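/- arXiv:1710.04799 — 6 statements merged into one kernel-verified Lean document; each statement's English description precedes it below -/
import Mathlib

section
/- Let K be a rigid symmetric monoidal category and f : x → y a morphism. Suppose z is an object such that (f ⊗ id_z)^{⊗n} = 0 for some n ≥ 1. Then f^{⊗n} ⊗ id_z = 0. -/
open CategoryTheory CategoryTheory.Limits CategoryTheory.MonoidalCategory
  CategoryTheory.Pretriangulated

namespace Balmer

universe w v u v₂ u₂ v₃ u₃ v₄ u₄

variable {C : Type u} [Category.{v} C]

/-- An object is finitely presented if its coYoneda functor preserves filtered colimits. -/
def IsFP (X : C) : Prop :=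
  ∀ (J : Type v) [SmallCategory J] [IsFiltered J],
    Nonempty (PreservesColimitsOfShape J (coyoneda.obj (Opposite.op X)))

section Monoidal
variable [MonoidalCategory C]

/-- `n`-fold tensor power of an object. -/
def tpow (x : C) : ℕ → C
  | 0 => 𝟙_ C
  | n + 1 => x ⊗ tpow x n

/-- `n`-fold tensor power of a morphism. -/
def tpowHom {x y : C} (f : x ⟶ y) : ∀ n, tpow x n ⟶ tpow y n
  | 0 => 𝟙 _
  | n + 1 => f ⊗ₘ tpowHom f n

/-- `n`-fold tensor power of a morphism out of the unit, as a morphism out of the unit. -/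
def upow {z : C} (g : 𝟙_ C ⟶ z) : ∀ n, 𝟙_ C ⟶ tpow z n
  | 0 => 𝟙 _
  | n + 1 => (λ_ (𝟙_ C)).inv ≫ (g ⊗ₘ upow g n)

/-- A ⊗-multiplicative class of objects: contains the unit and is closed under `⊗`. -/
def IsTensorMultiplicative (S : Set C) : Prop :=
  𝟙_ C ∈ S ∧ ∀ ⦃a⦄, a ∈ S → ∀ ⦃b⦄, b ∈ S → (a ⊗ b) ∈ S

end Monoidal

section SerrePlain
variable [Abelian C]

/-- A Serre subcategory (as a class of objects): contains the zeros and is closed under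
subobjects, quotients and extensions. -/
def IsSerre (B : Set C) : Prop :=
  (∀ X : C, IsZero X → X ∈ B) ∧
  (∀ ⦃X Y : C⦄ (i : X ⟶ Y), Mono i → Y ∈ B → X ∈ B) ∧
  (∀ ⦃X Y : C⦄ (p : X ⟶ Y), Epi p → X ∈ B → Y ∈ B) ∧
  (∀ S : ShortComplex C, S.ShortExact → S.X₁ ∈ B → S.X₃ ∈ B → S.X₂ ∈ B)

end SerrePlain

section SerrePlain2
variable [Abelian C]

/-- A Serre subcategory closed under (small) coproducts (no tensor). -/
def IsLocalizingSub (L : Set C) : Prop :=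
  IsSerre L ∧ ∀ (J : Type v) (g : J → C) [HasCoproduct g], (∀ j, g j ∈ L) → (∐ g) ∈ L

/-- The localizing subcategory generated by a class of objects (no tensor). -/
def LocSubGen (S : Set C) : Set C :=
  {M | ∀ L : Set C, IsLocalizingSub L → S ⊆ L → M ∈ L}

end SerrePlain2

section Serre
variable [Abelian C] [MonoidalCategory C]

/-- A Serre ⊗-ideal: a Serre subcategory closed under tensoring with arbitrary objects. -/
def IsSerreTensorIdeal (B : Set C) : Prop :=
  IsSerre B ∧ ∀ (X : C) ⦃M : C⦄, M ∈ B → (X ⊗ M) ∈ B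

/-- A maximal proper Serre ⊗-ideal. -/
def IsMaxSerreTensorIdeal (B : Set C) : Prop :=
  IsSerreTensorIdeal B ∧ 𝟙_ C ∉ B ∧
    ∀ B' : Set C, IsSerreTensorIdeal B' → 𝟙_ C ∉ B' → B ⊆ B' → B' = B

/-- The Serre ⊗-ideal generated by a class of objects. -/
def SerreTensorGen (S : Set C) : Set C :=
  {M | ∀ L : Set C, IsSerreTensorIdeal L → S ⊆ L → M ∈ L}

/-- A localizing ⊗-ideal: a Serre ⊗-ideal closed under (small) coproducts. -/
def IsLocalizingTensorIdeal (L : Set C) : Prop :=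
  IsSerreTensorIdeal L ∧
    ∀ (J : Type v) (g : J → C) [HasCoproduct g], (∀ j, g j ∈ L) → (∐ g) ∈ L

/-- The localizing ⊗-ideal generated by a class of objects. -/
def LocTensorGen (S : Set C) : Set C :=
  {M | ∀ L : Set C, IsLocalizingTensorIdeal L → S ⊆ L → M ∈ L}

/-- A Serre ⊗-ideal of the full (abelian, monoidal) subcategory of objects in `P`
(e.g. `P` = finitely presented objects). -/
def IsSerreTensorIdealIn (P B : Set C) : Prop :=
  B ⊆ P ∧
  (∀ X : C, IsZero X → X ∈ P → X ∈ B) ∧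
  (∀ ⦃X Y : C⦄ (i : X ⟶ Y), Mono i → X ∈ P → Y ∈ B → X ∈ B) ∧
  (∀ ⦃X Y : C⦄ (p : X ⟶ Y), Epi p → Y ∈ P → X ∈ B → Y ∈ B) ∧
  (∀ S : ShortComplex C, S.ShortExact → S.X₂ ∈ P → S.X₁ ∈ B → S.X₃ ∈ B → S.X₂ ∈ B) ∧
  (∀ ⦃X : C⦄, X ∈ P → ∀ ⦃M : C⦄, M ∈ B → (X ⊗ M) ∈ B)

/-- A maximal proper Serre ⊗-ideal of the full subcategory of objects in `P`. -/
def IsMaxSerreTensorIdealIn (P B : Set C) : Prop :=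
  IsSerreTensorIdealIn P B ∧ 𝟙_ C ∉ B ∧
    ∀ B' : Set C, IsSerreTensorIdealIn P B' → 𝟙_ C ∉ B' → B ⊆ B' → B' = B

end Serre

section Tri
variable [Preadditive C] [HasZeroObject C] [HasShift C ℤ]
  [∀ n : ℤ, (shiftFunctor C n).Additive] [Pretriangulated C] [MonoidalCategory C]

/-- A thick ⊗-ideal of a tensor-triangulated category. -/
def IsThickTensorIdeal (P : Set C) : Prop :=
  (∀ ⦃x y : C⦄, (x ≅ y) → x ∈ P → y ∈ P) ∧
  (∀ (x : C) (n : ℤ), x ∈ P → (shiftFunctor C n).obj x ∈ P) ∧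
  (∀ T : Triangle C, T ∈ (distTriang C) → T.obj₁ ∈ P → T.obj₂ ∈ P → T.obj₃ ∈ P) ∧
  (∀ x y : C, (∃ (i : x ⟶ y) (r : y ⟶ x), i ≫ r = 𝟙 x) → y ∈ P → x ∈ P) ∧
  (∀ (x : C) ⦃y : C⦄, y ∈ P → (x ⊗ y) ∈ P)

/-- A prime thick ⊗-ideal. -/
def IsPrimeThickTensorIdeal (P : Set C) : Prop :=
  IsThickTensorIdeal P ∧ (∃ x : C, x ∉ P) ∧
    ∀ x y : C, (x ⊗ y) ∈ P → x ∈ P ∨ y ∈ P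

end Tri

/-!
The shuffle isomorphism `x^{⊗n} ⊗ z^{⊗n} ≅ (x ⊗ z)^{⊗n}` conjugates `f^{⊗n} ⊗ 𝟙_{z^{⊗n}}`
into `(f ⊗ 𝟙_z)^{⊗n}`, so `f^{⊗n} ▷ z^{⊗n} = 0`. It remains to peel the factors of `z^{⊗n}` off one
at a time. The objects `W` with `g ▷ W = 0` are closed under retracts and under `- ⊗ zᘁ`: the
tensor product is not assumed additive, but `- ⊗ zᘁ` is a right adjoint and therefore preserves
zero morphisms. By the snake identity `z ⊗ Y` is a retract of `(z ⊗ (z ⊗ Y)) ⊗ zᘁ`.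
-/

section TensorPowers
variable [MonoidalCategory C]

@[simp]
lemma tpowHom_id (z : C) : ∀ n, tpowHom (𝟙 z) n = 𝟙 (tpow z n)
  | 0 => rfl
  | n + 1 => by rw [tpowHom, tpowHom_id z n, id_tensorHom_id]; rfl

variable [BraidedCategory C]

@[simps]
def tensorμIso (x₁ x₂ y₁ y₂ : C) : (x₁ ⊗ x₂) ⊗ (y₁ ⊗ y₂) ≅ (x₁ ⊗ y₁) ⊗ (x₂ ⊗ y₂) where
  hom := tensorμ x₁ x₂ y₁ y₂
  inv := tensorδ x₁ x₂ y₁ y₂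

def tpowTensorIso (x z : C) : ∀ n, tpow x n ⊗ tpow z n ≅ tpow (x ⊗ z) n
  | 0 => λ_ (𝟙_ C)
  | n + 1 => tensorμIso x (tpow x n) z (tpow z n) ≪≫ whiskerLeftIso (x ⊗ z) (tpowTensorIso x z n)

lemma tpowTensorIso_hom_naturality {x y z w : C} (f : x ⟶ y) (g : z ⟶ w) : ∀ n,
    (tpowHom f n ⊗ₘ tpowHom g n) ≫ (tpowTensorIso y w n).hom =
      (tpowTensorIso x z n).hom ≫ tpowHom (f ⊗ₘ g) n
  | 0 => by
    dsimp only [tpowHom, tpowTensorIso, tpow]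
    simp
  | n + 1 => by
    dsimp only [tpowHom, tpowTensorIso, tpow]
    simp only [Iso.trans_hom, tensorμIso_hom, whiskerLeftIso_hom, tensorμ_natural_assoc,
      Category.assoc]
    rw [tensorHom_comp_whiskerLeft, whiskerLeft_comp_tensorHom,
      tpowTensorIso_hom_naturality f g n]

lemma tensorHom_tpowHom_eq_zero [HasZeroMorphisms C] {x y z w : C} (f : x ⟶ y) (g : z ⟶ w)
    (n : ℕ) (h : tpowHom (f ⊗ₘ g) n = 0) : tpowHom f n ⊗ₘ tpowHom g n = 0 := by
  rw [(Iso.eq_comp_inv _).mpr (tpowTensorIso_hom_naturality f g n), h]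
  simp

end TensorPowers

section Retracts
variable [MonoidalCategory C]

def retractTensorRightDualTensor (X : C) [HasRightDual X] : Retract X (X ⊗ (Xᘁ ⊗ X)) where
  i := (λ_ X).inv ≫ η_ X Xᘁ ▷ X ≫ (α_ X Xᘁ X).hom
  r := X ◁ ε_ X Xᘁ ≫ (ρ_ X).hom

def retractTensorTensorRightDual [BraidedCategory C] (z Y : C) [HasRightDual z] :
    Retract (z ⊗ Y) ((z ⊗ (z ⊗ Y)) ⊗ zᘁ) :=
  ((retractTensorRightDualTensor z).map (tensorRight Y)).trans <| Retract.ofIso <|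
    α_ _ _ _ ≪≫ whiskerLeftIso z (α_ _ _ _ ≪≫ β_ _ _) ≪≫ (α_ _ _ _).symm

end Retracts

section ZeroWhiskering
variable [MonoidalCategory C] [HasZeroMorphisms C]

lemma zero_whiskerRight_of_exactPairing {a b : C} (V W : C) [ExactPairing V W] :
    (0 : a ⟶ b) ▷ W = 0 :=
  have := (tensorRightAdjunction V W).isRightAdjoint
  (tensorRight W).map_zero a b

lemma whiskerRight_eq_zero_of_retract {a b W W' : C} (g : a ⟶ b) (h : Retract W W')
    (hg : g ▷ W' = 0) : g ▷ W = 0 := by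
  rw [← Category.comp_id (g ▷ W), ← MonoidalCategory.whiskerLeft_id, ← h.retract,
    MonoidalCategory.whiskerLeft_comp, ← Category.assoc, ← whisker_exchange, hg]
  simp

lemma whiskerRight_tensor_eq_zero_of_exactPairing {a b : C} (g : a ⟶ b) (W : C)
    (V V' : C) [ExactPairing V V'] (hg : g ▷ W = 0) : g ▷ (W ⊗ V') = 0 := by
  rw [whiskerRight_tensor, hg, zero_whiskerRight_of_exactPairing V V']
  simp

lemma whiskerRight_eq_zero_of_whiskerRight_tpow_eq_zero [BraidedCategory C] {a b : C}
    (g : a ⟶ b) (z : C) [HasRightDual z] : ∀ m, g ▷ tpow z (m + 1) = 0 → g ▷ z = 0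
  | 0, hg => whiskerRight_eq_zero_of_retract g (.ofIso (ρ_ z).symm) hg
  | m + 1, hg => whiskerRight_eq_zero_of_whiskerRight_tpow_eq_zero g z m <|
      whiskerRight_eq_zero_of_retract g (retractTensorTensorRightDual z (tpow z m)) <|
        whiskerRight_tensor_eq_zero_of_exactPairing g _ z zᘁ hg

end ZeroWhiskering

/-- In a rigid symmetric monoidal category, if `(f ⊗ id_z)^{⊗n} = 0`
for some `n ≥ 1`, then `f^{⊗n} ⊗ id_z = 0`. -/
theorem stmt2 {K : Type u} [Category.{v} K] [Preadditive K] [MonoidalCategory K]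
    [SymmetricCategory K] [RigidCategory K] {x y : K} (f : x ⟶ y) (z : K)
    (n : ℕ) (hn : 1 ≤ n) (h : tpowHom (f ⊗ₘ (𝟙 z)) n = 0) :
    tpowHom f n ⊗ₘ (𝟙 z) = 0 := by
  obtain ⟨m, rfl⟩ := Nat.exists_eq_add_of_le' hn
  have hpow : tpowHom f (m + 1) ▷ tpow z (m + 1) = 0 := by
    simpa using tensorHom_tpowHom_eq_zero f (𝟙 z) (m + 1) h
  rw [tensorHom_id]
  exact whiskerRight_eq_zero_of_whiskerRight_tpow_eq_zero _ z m hpow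

end Balmer
end

section
/- Let A be an abelian symmetric monoidal category whose tensor is right-exact in each variable, let F be a ⊗-flat object, and let f : 𝟙 → F be a morphism. Define B₀ to be the class of objects M of A such that f^{⊗n} ⊗ id_M = 0 for some n ≥ 1. Then B₀ is closed under extensions: if 0 → M₁ → M₂ → M₃ → 0 is exact with M₁, M₃ ∈ B₀ (say f^{⊗n₁} ⊗ M₁ = 0 and f^{⊗n₃} ⊗ M₃ = 0), then f^{⊗(n₁+n₃)} ⊗ M₂ = 0. -/
/-!
Write `f^{⊗(n₁+n₃)}` as `f^{⊗n₃}` followed by `F^{⊗n₃} ⊗ f^{⊗n₁}` and tensor with `M₂`.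
The first factor `f^{⊗n₃} ⊗ M₂` becomes zero after `F^{⊗n₃} ⊗ (M₂ → M₃)`, because
`f^{⊗n₃}` kills `M₃`. The second factor kills the image of `F^{⊗n₃} ⊗ M₁`, because `f^{⊗n₁}`
kills `M₁`, so by right exactness of `F^{⊗n₃} ⊗ -` it factors through
`F^{⊗n₃} ⊗ (M₂ → M₃)`. Hence the composite vanishes.
-/

open CategoryTheory CategoryTheory.Limits CategoryTheory.MonoidalCategory
  CategoryTheory.Pretriangulated

namespace Balmer

universe w v u v₂ u₂ v₃ u₃ v₄ u₄

variable {C : Type u} [Category.{v} C]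

section TensorPowers

variable {C : Type u} [Category.{v} C] [MonoidalCategory C]

def tpowAdd (F : C) (a : ℕ) : ∀ b, tpow F b ⊗ tpow F a ⟶ tpow F (a + b)
  | 0 => (λ_ (tpow F a)).hom
  | b + 1 => (α_ F (tpow F b) (tpow F a)).hom ≫ F ◁ tpowAdd F a b

lemma upow_add {F : C} (f : 𝟙_ C ⟶ F) (a b : ℕ) :
    upow f (a + b) = (upow f b ≫ (ρ_ _).inv ≫ tpow F b ◁ upow f a) ≫ tpowAdd F a b := by
  induction b with
  | zero =>
    change upow f a = (𝟙 _ ≫ (ρ_ (𝟙_ C)).inv ≫ 𝟙_ C ◁ upow f a) ≫ (λ_ (tpow F a)).hom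
    simp [unitors_equal]
  | succ b ih =>
    change (λ_ (𝟙_ C)).inv ≫ (f ⊗ₘ upow f (a + b)) = _
    rw [ih]
    simp only [upow, tpowAdd]
    monoidal

end TensorPowers

section RightExact

variable {C : Type u} [Category.{v} C] [Abelian C] [MonoidalCategory C] [MonoidalPreadditive C]

lemma whiskerRight_X₂_eq_zero_of_shortExact {S : ShortComplex C} (hS : S.ShortExact) {Y Z : C}
    [PreservesFiniteColimits (tensorLeft Y)] (w : 𝟙_ C ⟶ Y) (u : 𝟙_ C ⟶ Z)
    (hw : w ▷ S.X₃ = 0) (hu : u ▷ S.X₁ = 0) :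
    (w ≫ (ρ_ Y).inv ≫ Y ◁ u) ▷ S.X₂ = 0 := by
  have := hS.epi_g
  have hcoker := CokernelCofork.mapIsColimit _ hS.exact.gIsCokernel (tensorLeft Y)
  have hf : Y ◁ S.f ≫ ((ρ_ Y).inv ≫ Y ◁ u) ▷ S.X₂ = 0 := by
    rw [whisker_exchange, comp_whiskerRight, whisker_assoc, hu]
    simp
  obtain ⟨ψ, hψ⟩ : ∃ ψ : Y ⊗ S.X₃ ⟶ (Y ⊗ Z) ⊗ S.X₂,
      Y ◁ S.g ≫ ψ = ((ρ_ Y).inv ≫ Y ◁ u) ▷ S.X₂ :=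
    ⟨_, (CokernelCofork.IsColimit.desc' hcoker _ hf).2⟩
  calc (w ≫ (ρ_ Y).inv ≫ Y ◁ u) ▷ S.X₂ = w ▷ S.X₂ ≫ Y ◁ S.g ≫ ψ := by
        rw [comp_whiskerRight, hψ]
    _ = 𝟙_ C ◁ S.g ≫ w ▷ S.X₃ ≫ ψ := by rw [whisker_exchange_assoc]
    _ = 0 := by rw [hw, zero_comp, comp_zero]

end RightExact

/-- With `F` ⊗-flat and `f : 𝟙 ⟶ F`, the class
`B₀ = {M | f^{⊗n} ⊗ id_M = 0 for some n ≥ 1}` is closed under extensions: if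
`0 → M₁ → M₂ → M₃ → 0` is exact with `f^{⊗n₁} ⊗ M₁ = 0` and `f^{⊗n₃} ⊗ M₃ = 0`, then
`f^{⊗(n₁+n₃)} ⊗ M₂ = 0`. -/
theorem stmt4 {A : Type u} [Category.{v} A] [Abelian A] [MonoidalCategory A]
    [SymmetricCategory A] [MonoidalPreadditive A]
    [∀ X : A, PreservesFiniteColimits (tensorLeft X)]
    (F : A) (hF : PreservesFiniteLimits (tensorLeft F)) (f : 𝟙_ A ⟶ F)
    (S : ShortComplex A) (hS : S.ShortExact) (n₁ n₃ : ℕ)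
    (h1 : upow f n₁ ▷ S.X₁ = 0) (h3 : upow f n₃ ▷ S.X₃ = 0) :
    upow f (n₁ + n₃) ▷ S.X₂ = 0 := by
  rw [upow_add, comp_whiskerRight, whiskerRight_X₂_eq_zero_of_shortExact hS _ _ h3 h1, zero_comp]

end Balmer
end

section
/- Let A be an abelian symmetric monoidal category with right-exact tensor, F a ⊗-flat object, f : 𝟙 → F. The class B₀ = { M ∈ A : f^{⊗n} ⊗ id_M = 0 for some n ≥ 1 } is a Serre ⊗-ideal: it is closed under subobjects, quotients, extensions, and tensoring with arbitrary objects of A. -/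
open CategoryTheory CategoryTheory.Limits CategoryTheory.MonoidalCategory
  CategoryTheory.Pretriangulated

namespace Balmer

universe w v u v₂ u₂ v₃ u₃ v₄ u₄

variable {C : Type u} [Category.{v} C]

/-!
Write `fⁿ : 𝟙 ⟶ F^{⊗n}` for `upow f n`. Since `F^{⊗n}` is flat, `F^{⊗n} ◁ i` is mono for a mono
`i`, which gives closure under subobjects; closure under quotients is automatic because
`𝟙 ◁ p ≅ p`, and closure under `X ⊗ -` follows from the braiding. For an extension
`0 → M' → M → M'' → 0` with `fⁿ ▷ M'' = 0`, flatness makes `F^{⊗n} ⊗ M'` the kernel of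
`F^{⊗n} ⊗ M → F^{⊗n} ⊗ M''`, so `fⁿ ▷ M` factors through `F^{⊗n} ⊗ M'`. If `fᵐ ▷ M' = 0` then
`fᵐ` also kills `F^{⊗n} ⊗ M'`, and since `f^{m+n} = fᵐ ⊗ fⁿ` up to the canonical isomorphism,
`f^{m+n} ▷ M = 0`.
-/

section Monoidal

variable [MonoidalCategory C]

lemma preservesFiniteLimits_tensorLeft_tpow (F : C) [PreservesFiniteLimits (tensorLeft F)]
    (n : ℕ) : PreservesFiniteLimits (tensorLeft (tpow F n)) := by
  induction n with
  | zero => exact preservesFiniteLimits_of_natIso (leftUnitorNatIso C).symm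
  | succ n ih =>
    have := comp_preservesFiniteLimits (tensorLeft (tpow F n)) (tensorLeft F)
    exact preservesFiniteLimits_of_natIso (tensorLeftTensor F (tpow F n)).symm

lemma exists_iso_upow_add {F : C} (f : 𝟙_ C ⟶ F) (m n : ℕ) :
    ∃ μ : tpow F m ⊗ tpow F n ≅ tpow F (m + n),
      upow f (m + n) = (λ_ (𝟙_ C)).inv ≫ (upow f m ⊗ₘ upow f n) ≫ μ.hom := by
  induction m with
  | zero =>
    rw [Nat.zero_add]
    refine ⟨λ_ (tpow F n), ?_⟩
    change upow f n = (λ_ (𝟙_ C)).inv ≫ (𝟙 (𝟙_ C) ⊗ₘ upow f n) ≫ (λ_ (tpow F n)).hom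
    rw [id_tensorHom, leftUnitor_naturality, Iso.inv_hom_id_assoc]
  | succ m ih =>
    obtain ⟨μ, hμ⟩ := ih
    rw [Nat.add_right_comm]
    refine ⟨α_ F (tpow F m) (tpow F n) ≪≫ whiskerLeftIso F μ, ?_⟩
    change (λ_ (𝟙_ C)).inv ≫ (f ⊗ₘ upow f (m + n)) =
      (λ_ (𝟙_ C)).inv ≫ (((λ_ (𝟙_ C)).inv ≫ (f ⊗ₘ upow f m)) ⊗ₘ upow f n) ≫
        (α_ F (tpow F m) (tpow F n)).hom ≫ F ◁ μ.hom
    rw [hμ]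
    simp only [MonoidalCategory.tensorHom_def, comp_whiskerRight, whisker_assoc, whiskerLeft_comp,
      Category.assoc]
    monoidal

section ZeroMorphisms

variable [HasZeroMorphisms C]

lemma whiskerRight_eq_zero_of_epi {T X Y : C} (g : 𝟙_ C ⟶ T) (p : X ⟶ Y)
    [Epi p] (h : g ▷ X = 0) : g ▷ Y = 0 := by
  have : Epi (𝟙_ C ◁ p) := by rw [id_whiskerLeft]; infer_instance
  rw [← cancel_epi (𝟙_ C ◁ p), whisker_exchange, h, zero_comp, comp_zero]

lemma whiskerRight_eq_zero_of_mono {U T X Y : C}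
    [PreservesFiniteLimits (tensorLeft T)] (g : U ⟶ T) (i : X ⟶ Y) [Mono i] (h : g ▷ Y = 0) :
    g ▷ X = 0 := by
  have : Mono (T ◁ i) := inferInstanceAs (Mono ((tensorLeft T).map i))
  rw [← cancel_mono (T ◁ i), ← whisker_exchange, h, comp_zero, zero_comp]

lemma upow_add_whiskerRight_eq_zero {F M W : C} (f : 𝟙_ C ⟶ F) {m n : ℕ}
    (k : 𝟙_ C ⊗ M ⟶ W) (e : W ⟶ tpow F n ⊗ M) (hk : upow f n ▷ M = k ≫ e)
    (hW : upow f m ▷ W = 0) : upow f (m + n) ▷ M = 0 := by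
  obtain ⟨μ, hμ⟩ := exists_iso_upow_add f m n
  rw [hμ]
  simp only [comp_whiskerRight, MonoidalCategory.tensorHom_def, Category.assoc, whisker_assoc, hk,
    whiskerLeft_comp]
  rw [associator_naturality_left_assoc, ← whisker_exchange_assoc, hW]
  simp

end ZeroMorphisms

variable [Preadditive C] [MonoidalPreadditive C]

lemma whiskerRight_eq_zero_of_isZero {U T X : C} (g : U ⟶ T) (hX : IsZero X) : g ▷ X = 0 :=
  ((tensorLeft T).map_isZero hX).eq_of_tgt _ _

lemma whiskerRight_tensor_eq_zero [BraidedCategory C] {U T M : C} (g : U ⟶ T)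
    (h : g ▷ M = 0) (Z : C) : g ▷ (Z ⊗ M) = 0 := by
  have hMZ : g ▷ (M ⊗ Z) = 0 := by
    rw [whiskerRight_tensor, h, MonoidalPreadditive.zero_whiskerRight, zero_comp, comp_zero]
  have hbraid : g ▷ (Z ⊗ M) = (U ◁ (β_ Z M).hom ≫ g ▷ (M ⊗ Z)) ≫ T ◁ (β_ Z M).inv := by
    rw [whisker_exchange]
    simp
  rw [hbraid, hMZ, comp_zero, zero_comp]

end Monoidal

lemma exists_whiskerRight_eq_comp_of_shortExact [Abelian C] [MonoidalCategory C]
    [MonoidalPreadditive C] {U T : C} [PreservesFiniteLimits (tensorLeft T)] (g : U ⟶ T)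
    {S : ShortComplex C} (hS : S.ShortExact) (h : g ▷ S.X₃ = 0) :
    ∃ k : U ⊗ S.X₂ ⟶ T ⊗ S.X₁, g ▷ S.X₂ = k ≫ T ◁ S.f := by
  have hker := isLimitForkMapOfIsLimit' (tensorLeft T) S.zero hS.fIsKernel
  have hg : g ▷ S.X₂ ≫ T ◁ S.g = 0 := by
    rw [← whisker_exchange, h, comp_zero]
  obtain ⟨k, hk⟩ := KernelFork.IsLimit.lift' hker _ hg
  exact ⟨k, hk.symm⟩

/-- With `F` ⊗-flat and `f : 𝟙 ⟶ F`, the class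
`B₀ = {M | f^{⊗n} ⊗ id_M = 0 for some n ≥ 1}` is a Serre ⊗-ideal. -/
theorem stmt5 {A : Type u} [Category.{v} A] [Abelian A] [MonoidalCategory A]
    [SymmetricCategory A] [MonoidalPreadditive A]
    [∀ X : A, PreservesFiniteColimits (tensorLeft X)]
    (F : A) (hF : PreservesFiniteLimits (tensorLeft F)) (f : 𝟙_ A ⟶ F) :
    IsSerreTensorIdeal {M : A | ∃ n : ℕ, 1 ≤ n ∧ upow f n ▷ M = 0} := by
  have := preservesFiniteLimits_tensorLeft_tpow F
  refine ⟨⟨fun X hX ↦ ⟨1, le_rfl, whiskerRight_eq_zero_of_isZero _ hX⟩, ?_, ?_, ?_⟩, ?_⟩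
  · rintro X Y i _ ⟨n, hn, h⟩
    exact ⟨n, hn, whiskerRight_eq_zero_of_mono _ i h⟩
  · rintro X Y p _ ⟨n, hn, h⟩
    exact ⟨n, hn, whiskerRight_eq_zero_of_epi _ p h⟩
  · rintro S hS ⟨m, hm, h₁⟩ ⟨n, -, h₃⟩
    obtain ⟨k, hk⟩ := exists_whiskerRight_eq_comp_of_shortExact _ hS h₃
    exact ⟨m + n, by omega,
      upow_add_whiskerRight_eq_zero f k _ hk (whiskerRight_tensor_eq_zero _ h₁ _)⟩
  · rintro X M ⟨n, hn, h⟩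
    exact ⟨n, hn, whiskerRight_tensor_eq_zero _ h X⟩

end Balmer
end

section
/- Let A be an abelian symmetric monoidal category whose tensor is right-exact, and suppose x is a strongly dualizable ⊗-flat object of A with unit map η_x : 𝟙 → x^∨ ⊗ x. Then x ⊗ ker(η̂_x) = 0, where ker(η̂_x) denotes the kernel of η_x. Consequently, if C is a Serre ⊗-ideal of A containing both x and ker(η_x), then C contains the unit 𝟙, i.e. C = A (if C is an ideal in the strong sense that 𝟙 ∈ C forces C = A). -/
/-!
The triangle identity makes `x ◁ η` a split monomorphism, and since `x ⊗ -` is left exact it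
carries `ker η` to `ker (x ◁ η) = 0`. For the second part, `𝟙` is an extension of
`coim η ↪ ᘁx ⊗ x` by `ker η`, and both lie in any Serre ⊗-ideal containing `x` and `ker η`.
-/

open CategoryTheory CategoryTheory.Limits CategoryTheory.MonoidalCategory
  CategoryTheory.Pretriangulated

namespace CategoryTheory

theorem ExactPairing.mono_whiskerLeft_coevaluation {C : Type*} [Category C] [MonoidalCategory C]
    (X Y : C) [ExactPairing X Y] : Mono (Y ◁ η_ X Y) := by
  have : Mono (Y ◁ η_ X Y ≫ (α_ Y X Y).inv ≫ ε_ X Y ▷ Y) := by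
    rw [ExactPairing.coevaluation_evaluation]
    infer_instance
  exact mono_of_mono _ ((α_ Y X Y).inv ≫ ε_ X Y ▷ Y)

theorem isZero_obj_kernel_of_mono_map {C D : Type*} [Category C] [Category D] [HasZeroMorphisms C]
    [HasZeroMorphisms D] (F : C ⥤ D) [F.PreservesZeroMorphisms]
    {X Y : C} (f : X ⟶ Y) [HasKernel f] [PreservesLimit (parallelPair f 0) F]
    [Mono (F.map f)] : IsZero (F.obj (kernel f)) :=
  (isZero_kernel_of_mono (F.map f)).of_iso (PreservesKernel.iso F f)

end CategoryTheory

namespace Balmer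

universe v u

theorem IsSerre.mem_of_kernel_mem {C : Type*} [Category C] [Abelian C] {B : Set C}
    (hB : IsSerre B) {X Y : C} (f : X ⟶ Y) (hK : kernel f ∈ B) (hY : Y ∈ B) : X ∈ B := by
  obtain ⟨-, hsub, -, hext⟩ := hB
  have hcoim : Abelian.coimage f ∈ B := hsub (Abelian.factorThruCoimage f) inferInstance hY
  let S := ShortComplex.mk (kernel.ι f) (Abelian.coimage.π f) (cokernel.condition _)
  have hS : S.ShortExact := ⟨S.exact_of_g_is_cokernel (cokernelIsCokernel _)⟩
  exact hext S hS hK hcoim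

/-- For a strongly dualizable ⊗-flat object `x` of an abelian symmetric
monoidal category with right-exact tensor, with unit `η_x : 𝟙 ⟶ x^∨ ⊗ x`, one has
`x ⊗ ker(η_x) = 0`; consequently any Serre ⊗-ideal containing both `x` and `ker(η_x)`
contains the unit `𝟙`. -/
theorem stmt6 {A : Type u} [Category.{v} A] [Abelian A] [MonoidalCategory A]
    [SymmetricCategory A] [MonoidalPreadditive A]
    [∀ X : A, PreservesFiniteColimits (tensorLeft X)]
    (x : A) [HasLeftDual x] (hx : PreservesFiniteLimits (tensorLeft x)) :
    IsZero (x ⊗ kernel (η_ (ᘁx) x)) ∧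
    (∀ B : Set A, IsSerreTensorIdeal B → x ∈ B →
      (kernel (η_ (ᘁx) x) : A) ∈ B → 𝟙_ A ∈ B) := by
  have : Mono ((tensorLeft x).map (η_ (ᘁx) x)) :=
    ExactPairing.mono_whiskerLeft_coevaluation (ᘁx) x
  exact ⟨isZero_obj_kernel_of_mono_map (tensorLeft x) _,
    fun B hB hxB hkB => hB.1.mem_of_kernel_mem _ hkB (hB.2 _ hxB)⟩

end Balmer
end

section
/- Let Q : A → A/⟨B⟩ be the Gabriel quotient of a locally coherent Grothendieck symmetric monoidal category A by the localizing subcategory ⟨B⟩ generated by a Serre ⊗-ideal B of A^fp. Let f : 𝟙 → F be a morphism in A with F ⊗-flat, and suppose every finitely presented subobject M ⊆ ker(f) satisfies f ⊗ id_M = 0 and hence M ∈ B. Then ker(f) ∈ ⟨B⟩ and Q(f) is a monomorphism in A/⟨B⟩. -/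
open CategoryTheory CategoryTheory.Limits CategoryTheory.MonoidalCategory
  CategoryTheory.Pretriangulated

namespace Balmer

universe w v u v₂ u₂ v₃ u₃ v₄ u₄

variable {C : Type u} [Category.{v} C]

theorem _root_.CategoryTheory.Limits.IsColimit.epi_sigmaDesc {J : Type v} [SmallCategory J]
    {D : J ⥤ C} {c : Cocone D} (hc : IsColimit c) [HasCoproduct D.obj] :
    Epi (Sigma.desc c.ι.app) :=
  ⟨fun g h hgh => hc.hom_ext fun j => by simpa using Sigma.ι D.obj j ≫= hgh⟩

theorem _root_.CategoryTheory.Functor.mono_map_of_isZero_obj_kernel {D : Type u₂}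
    [Category.{v₂} D] [HasZeroMorphisms C] [Preadditive D] (G : C ⥤ D)
    [G.PreservesZeroMorphisms] {X Y : C} (f : X ⟶ Y) [HasKernel f]
    [PreservesLimit (parallelPair f 0) G] (h : IsZero (G.obj (kernel f))) :
    Mono (G.map f) :=
  Preadditive.mono_of_isZero_kernel _ (h.of_iso (PreservesKernel.iso G f).symm)

section Localizing
variable [Abelian C] [MonoidalCategory C]

theorem IsLocalizingTensorIdeal.mem_of_isColimit {L : Set C} (hL : IsLocalizingTensorIdeal L)
    {J : Type v} [SmallCategory J] {D : J ⥤ C} {c : Cocone D} (hc : IsColimit c)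
    [HasCoproduct D.obj] (hD : ∀ j, D.obj j ∈ L) : c.pt ∈ L :=
  hL.1.1.2.2.1 _ hc.epi_sigmaDesc (hL.2 J D.obj hD)

theorem mem_locTensorGen_of_isColimit {S : Set C} {J : Type v} [SmallCategory J]
    {D : J ⥤ C} {c : Cocone D} (hc : IsColimit c) [HasCoproduct D.obj] (hD : ∀ j, D.obj j ∈ S) :
    c.pt ∈ LocTensorGen S :=
  fun _ hL hSL => hL.mem_of_isColimit hc fun j => hSL (hD j)

end Localizing

theorem stmt14_general {A : Type u} [Category.{v} A] {A' : Type u₂} [Category.{v₂} A']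
    [Abelian A] [Abelian A'] [MonoidalCategory A] [HasCoproducts.{v} A]
    (hAcoh : ∀ M : A, ∃ (J : Cat.{v, v}) (_ : IsFiltered J) (D : J ⥤ A) (c : Cocone D),
      Nonempty (IsColimit c) ∧ c.pt = M ∧ ∀ j : J, IsFP (D.obj j) ∧ Mono (c.ι.app j))
    (B : Set A) (Q : A ⥤ A') [PreservesFiniteLimits Q]
    (hQker : ∀ M : A, IsZero (Q.obj M) ↔ M ∈ LocTensorGen B)
    (F : A) (f : 𝟙_ A ⟶ F)
    (hsub : ∀ (M : A) (i : M ⟶ kernel f), Mono i → IsFP M → f ▷ M = 0 ∧ M ∈ B) :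
    kernel f ∈ LocTensorGen B ∧ Mono (Q.map f) := by
  obtain ⟨J, -, D, c, ⟨hc⟩, hpt, hD⟩ := hAcoh (kernel f)
  have hDB (j : J) : D.obj j ∈ B :=
    have := (hD j).2
    (hsub _ (c.ι.app j ≫ eqToHom hpt) inferInstance (hD j).1).2
  have hker : kernel f ∈ LocTensorGen B := hpt ▸ mem_locTensorGen_of_isColimit hc hDB
  exact ⟨hker, Q.mono_map_of_isZero_obj_kernel f ((hQker _).2 hker)⟩

/-- Let `Q : A ⥤ A'` be an exact (Gabriel-quotient) functor on a locally
coherent Grothendieck symmetric monoidal category `A`, whose kernel is the localizing ideal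
`⟨B⟩` generated by a Serre ⊗-ideal `B` of the finitely presented objects. Let `f : 𝟙 ⟶ F`
with `F` ⊗-flat, and suppose every finitely presented subobject `M` of `ker f` satisfies
`f ⊗ id_M = 0` and `M ∈ B`. Then `ker f ∈ ⟨B⟩` and `Q(f)` is a monomorphism. -/
theorem stmt14 {A : Type u} [Category.{v} A] {A' : Type u₂} [Category.{v₂} A']
    [Abelian A] [Abelian A'] [MonoidalCategory A] [SymmetricCategory A]
    [MonoidalPreadditive A] [HasCoproducts.{v} A]
    (hAcoh : ∀ M : A, ∃ (J : Cat.{v, v}) (_ : IsFiltered J) (D : J ⥤ A) (c : Cocone D),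
      Nonempty (IsColimit c) ∧ c.pt = M ∧ ∀ j : J, IsFP (D.obj j) ∧ Mono (c.ι.app j))
    (B : Set A) (hB : IsSerreTensorIdealIn {M : A | IsFP M} B)
    (Q : A ⥤ A') [PreservesFiniteLimits Q] [PreservesFiniteColimits Q]
    (hQker : ∀ M : A, IsZero (Q.obj M) ↔ M ∈ LocTensorGen B)
    (F : A) (hF : PreservesFiniteLimits (tensorLeft F)) (f : 𝟙_ A ⟶ F)
    (hsub : ∀ (M : A) (i : M ⟶ kernel f), Mono i → IsFP M → f ▷ M = 0 ∧ M ∈ B) :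
    kernel f ∈ LocTensorGen B ∧ Mono (Q.map f) :=
  stmt14_general hAcoh B Q hQker F f hsub

end Balmer
end

section
/- Let A be an abelian symmetric monoidal category with exact-in-each-variable tensor on flat objects, and let H : A → A' be an exact strong monoidal functor to a nonzero abelian monoidal category A' whose only Serre ⊗-ideals are 0 and A'. If E ∈ A is an object with H(E) ⊗-flat in A' and if there exists M ∈ A with E ⊗ M = 0 but H(M) ≠ 0, then H(E) = 0. -/
open CategoryTheory CategoryTheory.Limits CategoryTheory.MonoidalCategory
  CategoryTheory.Pretriangulated

namespace Balmer

universe w v u v₂ u₂ v₃ u₃ v₄ u₄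

variable {C : Type u} [Category.{v} C]

section KernelOfExact

variable [Abelian C]

theorem isSerre_setOf_isZero_obj {D : Type u₂} [Category.{v₂} D] [Abelian D] (G : C ⥤ D)
    [PreservesFiniteLimits G] [PreservesFiniteColimits G] :
    IsSerre {X : C | IsZero (G.obj X)} := by
  refine ⟨fun X hX => G.map_isZero hX, fun X Y i _ hY => ?_, fun X Y p _ hX => ?_,
    fun S hS h₁ h₃ => ?_⟩
  · exact IsZero.of_mono (G.map i) hY
  · exact IsZero.of_epi (G.map p) hX
  · have hGS := hS.map_of_exact G
    have : Mono (G.map S.g) := hGS.exact.mono_g (IsZero.eq_zero_of_src h₁ _)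
    exact IsZero.of_mono (G.map S.g) h₃

theorem isSerreTensorIdeal_setOf_isZero_tensor [MonoidalCategory C] [MonoidalPreadditive C]
    [BraidedCategory C] (F : C) [PreservesFiniteLimits (tensorLeft F)]
    [PreservesFiniteColimits (tensorLeft F)] :
    IsSerreTensorIdeal {X : C | IsZero (F ⊗ X)} := by
  refine ⟨isSerre_setOf_isZero_obj (tensorLeft F), fun X N hN => ?_⟩
  exact ((tensorLeft X).map_isZero hN).of_iso
    ((α_ _ _ _).symm ≪≫ whiskerRightIso (β_ F X) N ≪≫ α_ _ _ _)

end KernelOfExact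

/-- (Simplicity step in Balmer Thm 5.6.) Let `H : A ⥤ A'` be an exact
strong monoidal functor to a nonzero abelian monoidal category `A'` whose only Serre
⊗-ideals are `0` and `A'`. If `E ∈ A` has `H(E)` ⊗-flat and there exists `M` with
`E ⊗ M = 0` but `H(M) ≠ 0`, then `H(E) = 0`. -/
theorem stmt19 {A : Type u} [Category.{v} A] [Abelian A] [MonoidalCategory A]
    [SymmetricCategory A] [MonoidalPreadditive A]
    {A' : Type u₂} [Category.{v₂} A'] [Abelian A'] [MonoidalCategory A']
    [SymmetricCategory A'] [MonoidalPreadditive A']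
    [∀ X : A', PreservesFiniteColimits (tensorLeft X)]
    (H : A ⥤ A') [H.Monoidal] [PreservesFiniteLimits H] [PreservesFiniteColimits H]
    (hnz : ∃ X : A', ¬ IsZero X)
    (hsimple : ∀ C : Set A', IsSerreTensorIdeal C → C = {X : A' | IsZero X} ∨ C = Set.univ)
    (E : A) (hflat : PreservesFiniteLimits (tensorLeft (H.obj E)))
    (M : A) (hM : IsZero (E ⊗ M)) (hM' : ¬ IsZero (H.obj M)) :
    IsZero (H.obj E) := by
  have hHM : IsZero (H.obj E ⊗ H.obj M) :=
    (H.map_isZero hM).of_iso (Functor.Monoidal.μIso H E M)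
  rcases hsimple _ (isSerreTensorIdeal_setOf_isZero_tensor (H.obj E)) with hzero | huniv
  · exact absurd (hzero ▸ hHM : H.obj M ∈ {X : A' | IsZero X}) hM'
  · exact (Set.eq_univ_iff_forall.mp huniv (𝟙_ A')).of_iso (ρ_ _).symm

end Balmer
end
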